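/- arXiv:1608.04319 — 3 statements merged into one kernel-verified Lean document; each statement's English description precedes it below -/
import Mathlib

section
/- Let G be a finite simple graph with n vertices and m edges. Then NK(G^{-+}) = 2^m · (n-1)^n. -/
open Finset

variable {V : Type*}

/-- The Narumi–Katayama index: the product of the degrees of all vertices. -/
def NK {W : Type*} [Fintype W] (H : SimpleGraph W) [DecidableRel H.Adj] : ℕ :=
  ∏ v, H.degree v

/-- The first Zagreb index: the sum of the squares of the degrees. -/
def M1 [Fintype V] (G : SimpleGraph V) [DecidableRel G.Adj] : ℕ :=
  ∑ v, (G.degree v) ^ 2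

/-- The multiplicative sum Zagreb index: the product over the edges of `G` of the
sum of the degrees of the two endpoints. -/
def Pi1Star [Fintype V] [DecidableEq V] (G : SimpleGraph V) [DecidableRel G.Adj] : ℕ :=
  ∏ e ∈ G.edgeFinset,
    Sym2.lift ⟨fun u v => G.degree u + G.degree v, fun u v => by simp [Nat.add_comm]⟩ e

/-- A generic transformation graph on the vertex set `V(G) ∪ E(G)`, built from a
symmetric irreflexive relation `Rvv` between vertices, a symmetric irreflexive relation
`Ree` between edges, and an incidence relation `Rve` between vertices and edges. -/
def transGraph (G : SimpleGraph V) (Rvv : V → V → Prop) (Ree : Sym2 V → Sym2 V → Prop)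
    (Rve : V → Sym2 V → Prop)
    (hvv : Symmetric Rvv) (hvv' : Irreflexive Rvv)
    (hee : Symmetric Ree) (hee' : Irreflexive Ree) :
    SimpleGraph (V ⊕ G.edgeSet) where
  Adj a b :=
    match a, b with
    | Sum.inl u, Sum.inl v => Rvv u v
    | Sum.inr e, Sum.inr f => Ree e.1 f.1
    | Sum.inl u, Sum.inr e => Rve u e.1
    | Sum.inr e, Sum.inl u => Rve u e.1
  symm := ⟨by
    rintro (u | e) (v | f) h
    · exact hvv h
    · exact h
    · exact h
    · exact hee h⟩
  loopless := ⟨by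
    rintro (u | e) h
    · exact hvv' u h
    · exact hee' e.1 h⟩

instance transGraph.instDecidableAdj (G : SimpleGraph V) (Rvv : V → V → Prop)
    (Ree : Sym2 V → Sym2 V → Prop) (Rve : V → Sym2 V → Prop)
    (h1 : Symmetric Rvv) (h2 : Irreflexive Rvv) (h3 : Symmetric Ree) (h4 : Irreflexive Ree)
    [DecidableRel Rvv] [DecidableRel Ree] [∀ u e, Decidable (Rve u e)] :
    DecidableRel (transGraph G Rvv Ree Rve h1 h2 h3 h4).Adj := fun a b =>
  match a, b with
  | Sum.inl u, Sum.inl v => inferInstanceAs (Decidable (Rvv u v))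
  | Sum.inr e, Sum.inr f => inferInstanceAs (Decidable (Ree e.1 f.1))
  | Sum.inl u, Sum.inr e => inferInstanceAs (Decidable (Rve u e.1))
  | Sum.inr e, Sum.inl u => inferInstanceAs (Decidable (Rve u e.1))

/-- Two edges (as elements of `Sym2 V`) are adjacent: distinct and sharing an endpoint. -/
abbrev shareRel : Sym2 V → Sym2 V → Prop := fun e f => e ≠ f ∧ ∃ w, w ∈ e ∧ w ∈ f

lemma shareRel_symm : Symmetric (shareRel (V := V)) :=
  fun _ _ h => ⟨h.1.symm, h.2.imp fun _ hw => ⟨hw.2, hw.1⟩⟩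

lemma shareRel_irrefl : Irreflexive (shareRel (V := V)) := fun _ h => h.1 rfl

/-- Two edges are "non-adjacent": distinct and sharing no endpoint. -/
abbrev coshareRel : Sym2 V → Sym2 V → Prop := fun e f => e ≠ f ∧ ∀ w, w ∈ e → w ∉ f

lemma coshareRel_symm : Symmetric (coshareRel (V := V)) :=
  fun _ _ h => ⟨h.1.symm, fun w hf he => h.2 w he hf⟩

lemma coshareRel_irrefl : Irreflexive (coshareRel (V := V)) := fun _ h => h.1 rfl

/-- Non-adjacency of distinct vertices. -/
abbrev coAdj (G : SimpleGraph V) : V → V → Prop := fun u v => u ≠ v ∧ ¬ G.Adj u v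

lemma coAdj_symm (G : SimpleGraph V) : Symmetric (coAdj G) :=
  fun _ _ h => ⟨h.1.symm, fun ha => h.2 ha.symm⟩

lemma coAdj_irrefl (G : SimpleGraph V) : Irreflexive (coAdj G) := fun _ h => h.1 rfl

variable [Fintype V] [DecidableEq V]

/-- The transformation graph `G^{-+}`. -/
abbrev Gmp (G : SimpleGraph V) [DecidableRel G.Adj] : SimpleGraph (V ⊕ G.edgeSet) :=
  transGraph G (coAdj G) (fun _ _ => False) (fun u e => u ∈ e)
    (coAdj_symm G) (coAdj_irrefl G) (fun _ _ h => h.elim) (fun _ h => h)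

instance Gmp.instDecidableAdj (G : SimpleGraph V) [DecidableRel G.Adj] :
    DecidableRel (Gmp G).Adj :=
  transGraph.instDecidableAdj _ _ _ _ _ _ _ _

/-
In `G^{-+}` a vertex `u` is adjacent to the `n - 1 - deg u` vertices it is not adjacent to in `G`
and to the `deg u` edges incident to it, so it has degree `n - 1`; an edge is adjacent exactly to
its two endpoints, so it has degree `2`.
-/

namespace SimpleGraph

variable {α β : Type*} [Fintype α] [Fintype β]

theorem degree_eq_card_adj_inl_add_card_adj_inr (H : SimpleGraph (α ⊕ β)) [DecidableRel H.Adj]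
    (x : α ⊕ β) :
    H.degree x = #{a | H.Adj x (.inl a)} + #{b | H.Adj x (.inr b)} := by
  classical
  rw [degree, neighborFinset_eq_filter, card_filter, card_filter, card_filter,
    Fintype.sum_sum_type]

end SimpleGraph

section GmpAdj

omit [Fintype V] [DecidableEq V]

variable (G : SimpleGraph V) [DecidableRel G.Adj]

@[simp]
theorem Gmp_adj_inl_inl (u v : V) : (Gmp G).Adj (.inl u) (.inl v) ↔ u ≠ v ∧ ¬G.Adj u v :=
  Iff.rfl

@[simp]
theorem Gmp_adj_inr_inl (e : G.edgeSet) (u : V) :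
    (Gmp G).Adj (.inr e) (.inl u) ↔ u ∈ (e : Sym2 V) :=
  Iff.rfl

@[simp]
theorem Gmp_not_adj_inr_inr (e f : G.edgeSet) : ¬(Gmp G).Adj (.inr e) (.inr f) :=
  id

end GmpAdj

section GmpDegree

open SimpleGraph

variable (G : SimpleGraph V) [DecidableRel G.Adj]

theorem Gmp_degree_inl (u : V) : (Gmp G).degree (.inl u) = Fintype.card V - 1 := by
  have h_vert : #{v | (Gmp G).Adj (.inl u) (.inl v)} = Gᶜ.degree u := by
    rw [← card_neighborFinset_eq_degree, neighborFinset_eq_filter]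
    simp
  have h_edge : #{e : G.edgeSet | (Gmp G).Adj (.inl u) (.inr e)} = G.degree u := by
    rw [← card_incidenceSet_eq_degree, ← Fintype.card_subtype]
    exact Fintype.card_congr (Equiv.subtypeSubtypeEquivSubtypeInter (· ∈ G.edgeSet) (u ∈ ·))
  rw [degree_eq_card_adj_inl_add_card_adj_inr, h_vert, h_edge, degree_compl]
  have h_deg_lt := G.degree_lt_card_verts u
  omega

theorem Gmp_degree_inr (e : G.edgeSet) : (Gmp G).degree (.inr e) = 2 := by
  have h_vert : #{v | (Gmp G).Adj (.inr e) (.inl v)} = 2 := by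
    rw [← G.card_toFinset_mem_edgeFinset ⟨e, G.mem_edgeFinset.2 e.2⟩]
    congr 1
    ext v
    simp
  have h_edge : #{f : G.edgeSet | (Gmp G).Adj (.inr e) (.inr f)} = 0 := by
    simp
  rw [degree_eq_card_adj_inl_add_card_adj_inr, h_vert, h_edge]

end GmpDegree

theorem stmt_3 (G : SimpleGraph V) [DecidableRel G.Adj] :
    NK (Gmp G) = 2 ^ G.edgeFinset.card * (Fintype.card V - 1) ^ Fintype.card V := by
  rw [NK, Fintype.prod_sum_type]
  simp only [Gmp_degree_inl, Gmp_degree_inr, prod_const, card_univ, G.edgeFinset_card]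
  ring
end

section
/- Let G be an r-regular finite simple graph with n vertices and m edges. Then NK(G^{++-}) = m^n · (2r+n-4)^m. -/
open Finset

variable {V : Type*}

variable [Fintype V] [DecidableEq V]

/-- The total transformation graph `G^{++-}`. -/
abbrev Gppm (G : SimpleGraph V) [DecidableRel G.Adj] : SimpleGraph (V ⊕ G.edgeSet) :=
  transGraph G G.Adj shareRel (fun u e => u ∉ e)
    (fun _ _ h => h.symm) (fun _ h => h.ne rfl) shareRel_symm shareRel_irrefl

instance Gppm.instDecidableAdj (G : SimpleGraph V) [DecidableRel G.Adj] :
    DecidableRel (Gppm G).Adj :=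
  transGraph.instDecidableAdj _ _ _ _ _ _ _ _

/-!
In `G^{++-}` a vertex `u` is adjacent to its `deg u` neighbours and to the `m - deg u` edges
avoiding it, so every vertex has degree `m`. An edge `ab` is adjacent to the `n - 2` vertices
off it and to the `deg a + deg b - 2` other edges through `a` or `b` (only `ab` itself lies on
both), so for an `r`-regular graph every edge has degree `2r + n - 4`.
-/

lemma Set.card_filter_univ_subtype {α : Type*} (s : Set α) [Fintype s] (p : α → Prop)
    [DecidablePred p] : #{x : s | p x} = #{x ∈ s.toFinset | p x} := by
  rw [← card_map (Function.Embedding.subtype _)]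
  congr 1
  ext x
  simp [and_comm]

namespace SimpleGraph

lemma degree_eq_card_inl_add_card_inr {α β : Type*} [Fintype α] [Fintype β]
    (H : SimpleGraph (α ⊕ β)) [DecidableRel H.Adj] (x : α ⊕ β) :
    H.degree x = #{a | H.Adj x (.inl a)} + #{b | H.Adj x (.inr b)} := by
  rw [← card_neighborFinset_eq_degree, ← card_disjSum]
  congr 1
  ext (a | b) <;> simp

variable (G : SimpleGraph V) [DecidableRel G.Adj]

lemma card_edgeFinset_filter_notMem (u : V) :
    #{e ∈ G.edgeFinset | u ∉ e} = #G.edgeFinset - G.degree u := by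
  rw [filter_not, card_sdiff_of_subset (filter_subset _ _), ← incidenceFinset_eq_filter,
    card_incidenceFinset_eq_degree]

lemma card_edgeFinset_filter_shareRel {a b : V} (hab : G.Adj a b) :
    #{f ∈ G.edgeFinset | shareRel s(a, b) f} = G.degree a + G.degree b - 2 := by
  have hfilter : ({f ∈ G.edgeFinset | shareRel s(a, b) f} : Finset _)
      = (G.incidenceFinset a ∪ G.incidenceFinset b).erase s(a, b) := by
    ext f
    simp [incidenceFinset_eq_filter, shareRel, eq_comm]
    tauto
  have hinter : G.incidenceFinset a ∩ G.incidenceFinset b = {s(a, b)} := by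
    ext f
    simp only [mem_inter, mem_incidenceFinset, mem_singleton, ← Set.mem_inter_iff,
      G.incidenceSet_inter_incidenceSet_of_adj hab, Set.mem_singleton_iff]
  have hunion := card_union_add_card_inter (G.incidenceFinset a) (G.incidenceFinset b)
  rw [hinter, card_singleton, card_incidenceFinset_eq_degree,
    card_incidenceFinset_eq_degree] at hunion
  rw [hfilter, card_erase_of_mem (by simp [hab])]
  omega

lemma Gppm_degree_inl (u : V) : (Gppm G).degree (.inl u) = #G.edgeFinset := by
  have hadj : #{v | (Gppm G).Adj (.inl u) (.inl v)} = G.degree u := by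
    rw [← card_neighborFinset_eq_degree, neighborFinset_eq_filter]
    rfl
  have hinc : #{e | (Gppm G).Adj (.inl u) (.inr e)} = #{e ∈ G.edgeFinset | u ∉ e} :=
    Set.card_filter_univ_subtype _ (u ∉ ·)
  rw [degree_eq_card_inl_add_card_inr, hadj, hinc, card_edgeFinset_filter_notMem]
  have := G.degree_le_card_edgeFinset u
  omega

lemma Gppm_degree_inr {a b : V} (he : s(a, b) ∈ G.edgeSet) :
    (Gppm G).degree (.inr ⟨s(a, b), he⟩) = G.degree a + G.degree b + Fintype.card V - 4 := by
  have hab : G.Adj a b := he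
  have hnot : #{v | (Gppm G).Adj (.inr ⟨s(a, b), he⟩) (.inl v)} = Fintype.card V - 2 := by
    have : ({v | v ∉ s(a, b)} : Finset V) = {a, b}ᶜ := by
      ext
      simp
    change #{v | v ∉ s(a, b)} = _
    rw [this, card_compl, card_pair hab.ne]
  have hshare : #{f | (Gppm G).Adj (.inr ⟨s(a, b), he⟩) (.inr f)}
      = #{f ∈ G.edgeFinset | shareRel s(a, b) f} :=
    Set.card_filter_univ_subtype _ (shareRel s(a, b))
  have ha : 0 < G.degree a := G.degree_pos_iff_exists_adj a |>.2 ⟨b, hab⟩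
  have hb : 0 < G.degree b := G.degree_pos_iff_exists_adj b |>.2 ⟨a, hab.symm⟩
  have hcard : 2 ≤ Fintype.card V := card_pair hab.ne ▸ card_le_univ {a, b}
  rw [degree_eq_card_inl_add_card_inr, hnot, hshare, card_edgeFinset_filter_shareRel G hab]
  omega

end SimpleGraph

theorem stmt_10 (G : SimpleGraph V) [DecidableRel G.Adj]
    (r : ℕ)
    (hreg : G.IsRegularOfDegree r) :
    NK (Gppm G) = G.edgeFinset.card ^ Fintype.card V * (2 * r + Fintype.card V - 4) ^ G.edgeFinset.card := by
  have hedge (e : G.edgeSet) : (Gppm G).degree (.inr e) = 2 * r + Fintype.card V - 4 := by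
    obtain ⟨e, he⟩ := e
    induction e using Sym2.ind with
    | h a b => rw [G.Gppm_degree_inr he, hreg a, hreg b, two_mul]
  rw [NK, Fintype.prod_sum_type, prod_congr rfl fun u _ => G.Gppm_degree_inl u,
    prod_congr rfl fun e _ => hedge e, prod_const, prod_const, card_univ, card_univ,
    G.edgeFinset_card]
end

section
/- Let G be a finite simple graph with n ≥ 1 vertices and m ≥ 1 edges. Then, as real numbers, NK(G^{-+-}) ≤ ((m+n-1) - 4m/n)^n · ((n-4) + M1(G)/m)^m, with equality if and only if G is regular. -/
open Finset

variable {V : Type*}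

variable [Fintype V] [DecidableEq V]

/-- The total transformation graph `G^{-+-}`. -/
abbrev Gmpm (G : SimpleGraph V) [DecidableRel G.Adj] : SimpleGraph (V ⊕ G.edgeSet) :=
  transGraph G (coAdj G) shareRel (fun u e => u ∉ e)
    (coAdj_symm G) (coAdj_irrefl G) shareRel_symm shareRel_irrefl


/-!
In `G^{-+-}` a vertex `u` of `G` has degree `(n - 1 - d u) + (m - d u)` and an edge `ab` has
degree `(n - 2) + (d a + d b - 2)`. Hence `NK(G^{-+-})` is a product of `n` vertex factors with
mean `m + n - 1 - 4m/n` (as `∑ d u = 2m`) and `m` edge factors with mean `n - 4 + M1/m` (as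
`∑_{ab} (d a + d b) = M1`), and the bound is AM-GM applied to each of the two products. For a
regular graph all vertex factors agree and all edge factors agree. Conversely, at equality the
vertex AM-GM is tight, so all degrees agree, unless the edge mean vanishes; but an edge factor is
zero only for `G = K₂`.
-/

namespace Real

variable {ι : Type*} {s : Finset ι} {z : ι → ℝ}

private lemma geomMean_pow_card (hs : s.Nonempty) (hz : ∀ i ∈ s, 0 ≤ z i) :
    (∏ i ∈ s, z i ^ ((#s : ℝ)⁻¹)) ^ #s = ∏ i ∈ s, z i := by
  rw [← Finset.prod_pow]
  exact Finset.prod_congr rfl fun i hi => rpow_inv_natCast_pow (hz i hi) hs.card_pos.ne'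

private lemma sum_inv_card_mul : ∑ i ∈ s, (#s : ℝ)⁻¹ * z i = (∑ i ∈ s, z i) / #s := by
  rw [← Finset.mul_sum, inv_mul_eq_div]

private lemma sum_inv_card (hs : s.Nonempty) : ∑ _i ∈ s, (#s : ℝ)⁻¹ = 1 := by
  rw [Finset.sum_const, nsmul_eq_mul, mul_inv_cancel₀ (by exact_mod_cast hs.card_pos.ne')]

theorem prod_le_arithMean_pow (hs : s.Nonempty) (hz : ∀ i ∈ s, 0 ≤ z i) :
    ∏ i ∈ s, z i ≤ ((∑ i ∈ s, z i) / #s) ^ #s := by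
  rw [← geomMean_pow_card hs hz, ← sum_inv_card_mul]
  exact pow_le_pow_left₀ (Finset.prod_nonneg fun i hi => rpow_nonneg (hz i hi) _)
    (geom_mean_le_arith_mean_weighted s _ z (fun _ _ => by positivity) (sum_inv_card hs) hz) _

theorem prod_eq_arithMean_pow_iff (hs : s.Nonempty) (hz : ∀ i ∈ s, 0 ≤ z i) :
    ∏ i ∈ s, z i = ((∑ i ∈ s, z i) / #s) ^ #s ↔ ∀ j ∈ s, ∀ k ∈ s, z j = z k := by
  have hsum : 0 ≤ ∑ i ∈ s, (#s : ℝ)⁻¹ * z i :=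
    Finset.sum_nonneg fun i hi => mul_nonneg (by positivity) (hz i hi)
  rw [← geomMean_pow_card hs hz, ← sum_inv_card_mul,
    pow_left_inj₀ (Finset.prod_nonneg fun i hi => rpow_nonneg (hz i hi) _) hsum hs.card_pos.ne']
  exact geom_mean_eq_arith_mean_weighted_iff_of_pos s _ z (fun _ _ => by positivity)
    (sum_inv_card hs) hz

end Real

theorem eq_of_mul_eq_mul_of_le_of_pos {α : Type*} [MulZeroClass α] [PartialOrder α]
    [PosMulMono α] [MulPosReflectLE α] {a b c d : α} (ha : 0 ≤ a) (hab : a ≤ b) (hcd : c ≤ d)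
    (hd : 0 < d) (h : a * c = b * d) : a = b :=
  le_antisymm hab (le_of_mul_le_mul_right (h ▸ mul_le_mul_of_nonneg_left hcd ha) hd)

section

-- Redeclaring `V` keeps the ambient `[DecidableEq V]` out of statements that do not need it.
variable {V : Type*} [Fintype V] (G : SimpleGraph V) [DecidableRel G.Adj] {Rvv : V → V → Prop}
  {Ree : Sym2 V → Sym2 V → Prop} {Rve : V → Sym2 V → Prop} (h1 : Symmetric Rvv)
  (h2 : Irreflexive Rvv) (h3 : Symmetric Ree) (h4 : Irreflexive Ree)
  [DecidableRel Rvv] [DecidableRel Ree] [∀ u e, Decidable (Rve u e)]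

theorem transGraph_degree_inl (u : V) :
    (transGraph G Rvv Ree Rve h1 h2 h3 h4).degree (Sum.inl u) =
      Fintype.card {v // Rvv u v} + Fintype.card {e : G.edgeSet // Rve u e} := by
  rw [← SimpleGraph.card_neighborSet_eq_degree, ← Fintype.card_sum]
  exact Fintype.card_congr Equiv.subtypeSum

theorem transGraph_degree_inr (e : G.edgeSet) :
    (transGraph G Rvv Ree Rve h1 h2 h3 h4).degree (Sum.inr e) =
      Fintype.card {v // Rve v e} + Fintype.card {f : G.edgeSet // Ree e f} := by
  rw [← SimpleGraph.card_neighborSet_eq_degree, ← Fintype.card_sum]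
  exact Fintype.card_congr Equiv.subtypeSum

end

theorem card_notMem_sym2_add_two {a b : V} (hab : a ≠ b) :
    Fintype.card {v // v ∉ s(a, b)} + 2 = Fintype.card V := by
  rw [Fintype.card_subtype, ← Finset.card_pair hab, ← Finset.card_univ, add_comm]
  convert Finset.card_filter_add_card_filter_not (s := Finset.univ) (· ∈ s(a, b))
  ext v
  simp [Sym2.mem_iff]

namespace SimpleGraph

section

variable {V : Type*} [Fintype V] (G : SimpleGraph V) [DecidableRel G.Adj]

theorem card_edgeSet_subtype (p : Sym2 V → Prop) [DecidablePred p] :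
    Fintype.card {e : G.edgeSet // p e} = #{e ∈ G.edgeFinset | p e} := by
  rw [Fintype.card_congr (Equiv.subtypeSubtypeEquivSubtypeInter _ p), Fintype.card_subtype]
  congr 1
  ext e
  simp

def endpointDegreeSum : Sym2 V → ℕ :=
  Sym2.lift ⟨fun u v => G.degree u + G.degree v, fun _ _ => Nat.add_comm _ _⟩

@[simp]
theorem endpointDegreeSum_mk (a b : V) :
    G.endpointDegreeSum s(a, b) = G.degree a + G.degree b := rfl

variable {G}

theorem IsRegularOfDegree.endpointDegreeSum_eq {r : ℕ} (hG : G.IsRegularOfDegree r)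
    (e : Sym2 V) : G.endpointDegreeSum e = 2 * r := by
  induction e using Sym2.ind with
  | _ a b => rw [endpointDegreeSum_mk, hG a, hG b, two_mul]

theorem isRegularOfDegree_one_of_card_eq_two (hV : Fintype.card V = 2) {a b : V}
    (hab : G.Adj a b) : G.IsRegularOfDegree 1 := by
  intro v
  have hle := G.degree_lt_card_verts v
  have hv : v = a ∨ v = b := by
    by_contra! hv
    have := Fintype.two_lt_card_iff.2 ⟨v, a, b, hv.1, hv.2, hab.ne⟩
    omega
  have hpos : 0 < G.degree v := by
    rcases hv with rfl | rfl
    exacts [(G.degree_pos_iff_exists_adj v).2 ⟨b, hab⟩,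
      (G.degree_pos_iff_exists_adj v).2 ⟨a, hab.symm⟩]
  omega

end

variable (G : SimpleGraph V) [DecidableRel G.Adj]

theorem card_compl_adj_add_degree (u : V) :
    Fintype.card {v // u ≠ v ∧ ¬G.Adj u v} + G.degree u + 1 = Fintype.card V := by
  have hcompl : Fintype.card {v // u ≠ v ∧ ¬G.Adj u v} = Gᶜ.degree u := by
    rw [← card_neighborSet_eq_degree]
    exact Fintype.card_congr (Equiv.subtypeEquivRight fun v => (G.compl_adj u v).symm)
  have := G.degree_lt_card_verts u
  rw [hcompl, degree_compl]
  omega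

theorem card_edgeSet_notMem_add_degree (u : V) :
    Fintype.card {e : G.edgeSet // u ∉ (e : Sym2 V)} + G.degree u = #G.edgeFinset := by
  rw [card_edgeSet_subtype G (u ∉ ·), ← card_incidenceFinset_eq_degree,
    incidenceFinset_eq_filter, add_comm]
  exact Finset.card_filter_add_card_filter_not _

theorem card_edgeSet_sharing_endpoint_add_two {a b : V} (hab : G.Adj a b) :
    Fintype.card {f : G.edgeSet // s(a, b) ≠ f ∧ ∃ w, w ∈ s(a, b) ∧ w ∈ (f : Sym2 V)} + 2 =
      G.degree a + G.degree b := by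
  have hshare : {f ∈ G.edgeFinset | s(a, b) ≠ f ∧ ∃ w, w ∈ s(a, b) ∧ w ∈ f} =
      (G.incidenceFinset a ∪ G.incidenceFinset b).erase s(a, b) := by
    ext f
    simp only [Finset.mem_filter, Finset.mem_erase, Finset.mem_union,
      incidenceFinset_eq_filter, Sym2.mem_iff, exists_eq_or_imp, exists_eq_left]
    tauto
  have hinter : G.incidenceFinset a ∩ G.incidenceFinset b = {s(a, b)} := by
    rw [← Finset.coe_inj, Finset.coe_inter, coe_incidenceFinset, coe_incidenceFinset,
      G.incidenceSet_inter_incidenceSet_of_adj hab, Finset.coe_singleton]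
  have hmem : s(a, b) ∈ G.incidenceFinset a ∪ G.incidenceFinset b := by
    simp [← Finset.singleton_subset_iff, ← hinter, Finset.inter_subset_union]
  have hunion := Finset.card_union_add_card_inter (G.incidenceFinset a) (G.incidenceFinset b)
  rw [hinter, Finset.card_singleton, card_incidenceFinset_eq_degree,
    card_incidenceFinset_eq_degree] at hunion
  have := Finset.card_pos.2 ⟨_, hmem⟩
  rw [card_edgeSet_subtype G (fun f => s(a, b) ≠ f ∧ ∃ w, w ∈ s(a, b) ∧ w ∈ f), hshare,
    Finset.card_erase_of_mem hmem]
  omega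

theorem sum_endpointDegreeSum : ∑ e ∈ G.edgeFinset, G.endpointDegreeSum e = M1 G := by
  have hedge : ∀ e ∈ G.edgeFinset, G.endpointDegreeSum e = ∑ v with v ∈ e, G.degree v := by
    intro e he
    induction e using Sym2.ind with
    | _ a b =>
      rw [endpointDegreeSum_mk, ← Finset.sum_pair (f := fun v => G.degree v)
        (G.mem_edgeFinset.1 he).ne]
      congr 1
      ext v
      simp [Sym2.mem_iff]
  rw [Finset.sum_congr rfl hedge, M1]
  simp only [Finset.sum_filter]
  rw [Finset.sum_comm]
  refine Finset.sum_congr rfl fun v _ => ?_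
  rw [← Finset.sum_filter, Finset.sum_const, ← incidenceFinset_eq_filter,
    card_incidenceFinset_eq_degree, smul_eq_mul, sq]

theorem Gmpm_degree_inl (u : V) :
    (Gmpm G).degree (Sum.inl u) + 2 * G.degree u + 1 = Fintype.card V + #G.edgeFinset := by
  have hV : Fintype.card {v // coAdj G u v} + G.degree u + 1 = Fintype.card V :=
    G.card_compl_adj_add_degree u
  have hE : Fintype.card {e : G.edgeSet // u ∉ (e : Sym2 V)} + G.degree u = #G.edgeFinset :=
    G.card_edgeSet_notMem_add_degree u
  rw [transGraph_degree_inl]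
  omega

theorem Gmpm_degree_inr (e : G.edgeSet) :
    (Gmpm G).degree (Sum.inr e) + 4 = Fintype.card V + G.endpointDegreeSum e := by
  obtain ⟨e, he⟩ := e
  induction e using Sym2.ind with
  | _ a b =>
    have hV : Fintype.card {v // v ∉ s(a, b)} + 2 = Fintype.card V :=
      card_notMem_sym2_add_two (G.ne_of_adj he)
    have hE : Fintype.card {f : G.edgeSet // shareRel s(a, b) f} + 2 =
        G.degree a + G.degree b :=
      G.card_edgeSet_sharing_endpoint_add_two he
    rw [transGraph_degree_inr, endpointDegreeSum_mk]
    dsimp only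
    omega

theorem Gmpm_degree_inl_eq_iff (u v : V) :
    (Gmpm G).degree (Sum.inl u) = (Gmpm G).degree (Sum.inl v) ↔ G.degree u = G.degree v := by
  have hu := G.Gmpm_degree_inl u
  have hv := G.Gmpm_degree_inl v
  omega

theorem sum_Gmpm_degree_inl :
    ∑ u, (Gmpm G).degree (Sum.inl u) + 4 * #G.edgeFinset + Fintype.card V =
      Fintype.card V * (Fintype.card V + #G.edgeFinset) := by
  have hsum := Finset.sum_congr rfl fun u (_ : u ∈ Finset.univ) => G.Gmpm_degree_inl u
  rw [Finset.sum_add_distrib, Finset.sum_add_distrib, ← Finset.mul_sum,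
    sum_degrees_eq_twice_card_edges] at hsum
  simp only [Finset.sum_const, Finset.card_univ, smul_eq_mul, mul_one] at hsum
  linarith

theorem sum_Gmpm_degree_inr :
    ∑ e : G.edgeSet, (Gmpm G).degree (Sum.inr e) + 4 * #G.edgeFinset =
      #G.edgeFinset * Fintype.card V + M1 G := by
  have hsum := Finset.sum_congr rfl fun e (_ : e ∈ Finset.univ) => G.Gmpm_degree_inr e
  rw [Finset.sum_add_distrib, Finset.sum_add_distrib] at hsum
  rw [← sum_endpointDegreeSum,
    Finset.sum_subtype G.edgeFinset (p := (· ∈ G.edgeSet)) (fun _ => G.mem_edgeFinset)]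
  simp only [Finset.sum_const, Finset.card_univ, smul_eq_mul, card_edgeSet] at hsum
  linarith

theorem isRegularOfDegree_one_of_Gmpm_degree_inr_eq_zero {e : G.edgeSet}
    (he : (Gmpm G).degree (Sum.inr e) = 0) : G.IsRegularOfDegree 1 := by
  obtain ⟨e, hmem⟩ := e
  induction e using Sym2.ind with
  | _ a b =>
    have hdeg := G.Gmpm_degree_inr ⟨s(a, b), hmem⟩
    have ha := (G.degree_pos_iff_exists_adj a).2 ⟨b, hmem⟩
    have hb := (G.degree_pos_iff_exists_adj b).2 ⟨a, hmem.symm⟩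
    have hV := Fintype.one_lt_card_iff_nontrivial.2 ⟨a, b, G.ne_of_adj hmem⟩
    rw [he, endpointDegreeSum_mk] at hdeg
    exact isRegularOfDegree_one_of_card_eq_two (by omega) hmem

theorem NK_Gmpm :
    (NK (Gmpm G) : ℝ) = (∏ u, ((Gmpm G).degree (Sum.inl u) : ℝ)) *
      ∏ e : G.edgeSet, ((Gmpm G).degree (Sum.inr e) : ℝ) := by
  rw [NK, Fintype.prod_sum_type, Nat.cast_mul, Nat.cast_prod, Nat.cast_prod]

theorem arithMean_Gmpm_degree_inl (hn : 1 ≤ Fintype.card V) :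
    (∑ u, ((Gmpm G).degree (Sum.inl u) : ℝ)) / Fintype.card V =
      ((#G.edgeFinset : ℝ) + Fintype.card V - 1) - 4 * #G.edgeFinset / Fintype.card V := by
  have hsum := congrArg (Nat.cast (R := ℝ)) G.sum_Gmpm_degree_inl
  push_cast at hsum
  have hn' : (0 : ℝ) < Fintype.card V := by exact_mod_cast hn
  rw [div_eq_iff hn'.ne']
  field_simp
  linarith

theorem arithMean_Gmpm_degree_inr (hm : 1 ≤ #G.edgeFinset) :
    (∑ e : G.edgeSet, ((Gmpm G).degree (Sum.inr e) : ℝ)) / #G.edgeFinset =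
      ((Fintype.card V : ℝ) - 4) + M1 G / #G.edgeFinset := by
  have hsum := congrArg (Nat.cast (R := ℝ)) G.sum_Gmpm_degree_inr
  push_cast at hsum
  have hm' : (0 : ℝ) < #G.edgeFinset := by exact_mod_cast hm
  rw [div_eq_iff hm'.ne']
  field_simp
  linarith

variable {G}

theorem IsRegularOfDegree.Gmpm_degree_inr_eq {r : ℕ} (hG : G.IsRegularOfDegree r)
    (e f : G.edgeSet) : (Gmpm G).degree (Sum.inr e) = (Gmpm G).degree (Sum.inr f) := by
  have he := G.Gmpm_degree_inr e
  have hf := G.Gmpm_degree_inr f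
  rw [hG.endpointDegreeSum_eq] at he hf
  omega

end SimpleGraph

theorem stmt_18 (G : SimpleGraph V) [DecidableRel G.Adj]
    (hn : 1 ≤ Fintype.card V)
    (hm : 1 ≤ G.edgeFinset.card) :
    (NK (Gmpm G) : ℝ) ≤ (((G.edgeFinset.card : ℝ) + Fintype.card V - 1) - 4 * G.edgeFinset.card / Fintype.card V) ^ Fintype.card V * (((Fintype.card V : ℝ) - 4) + (M1 G : ℝ) / G.edgeFinset.card) ^ G.edgeFinset.card ∧
      ((NK (Gmpm G) : ℝ) = (((G.edgeFinset.card : ℝ) + Fintype.card V - 1) - 4 * G.edgeFinset.card / Fintype.card V) ^ Fintype.card V * (((Fintype.card V : ℝ) - 4) + (M1 G : ℝ) / G.edgeFinset.card) ^ G.edgeFinset.card ↔ (∃ r, G.IsRegularOfDegree r)) := by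
  have hV : Nonempty V := Fintype.card_pos_iff.1 hn
  have hE : (Finset.univ : Finset G.edgeSet).Nonempty := by
    rw [Finset.univ_nonempty_iff, ← Fintype.card_pos_iff, G.card_edgeSet]
    exact hm
  have hx : ∀ u ∈ Finset.univ, (0 : ℝ) ≤ (Gmpm G).degree (Sum.inl u) :=
    fun _ _ => Nat.cast_nonneg _
  have hy : ∀ e ∈ Finset.univ, (0 : ℝ) ≤ (Gmpm G).degree (Sum.inr e) :=
    fun _ _ => Nat.cast_nonneg _
  have amV := Real.prod_le_arithMean_pow Finset.univ_nonempty hx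
  have eqV := Real.prod_eq_arithMean_pow_iff Finset.univ_nonempty hx
  have amE := Real.prod_le_arithMean_pow hE hy
  have eqE := Real.prod_eq_arithMean_pow_iff hE hy
  simp only [Finset.card_univ, G.card_edgeSet, Finset.mem_univ, forall_const] at amV eqV amE eqE
  rw [G.arithMean_Gmpm_degree_inl hn] at amV eqV
  rw [G.arithMean_Gmpm_degree_inr hm] at amE eqE
  rw [G.NK_Gmpm]
  refine ⟨mul_le_mul amV amE (Finset.prod_nonneg hy) ((Finset.prod_nonneg hx).trans amV),
    fun heq => ?_, fun ⟨r, hr⟩ => ?_⟩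
  · obtain hB | hB := ((Finset.prod_nonneg hy).trans amE).eq_or_lt
    · obtain ⟨e, -, he⟩ := Finset.prod_eq_zero_iff.1
        (le_antisymm (hB ▸ amE) (Finset.prod_nonneg hy))
      exact ⟨1, G.isRegularOfDegree_one_of_Gmpm_degree_inr_eq_zero (by exact_mod_cast he)⟩
    obtain ⟨u₀⟩ := hV
    have hP := eq_of_mul_eq_mul_of_le_of_pos (Finset.prod_nonneg hx) amV amE hB heq
    exact ⟨G.degree u₀, fun v =>
      (G.Gmpm_degree_inl_eq_iff v u₀).1 (by exact_mod_cast eqV.1 hP v u₀)⟩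
  · rw [eqV.2 fun u v => ?_, eqE.2 fun e f => by exact_mod_cast hr.Gmpm_degree_inr_eq e f]
    exact_mod_cast (G.Gmpm_degree_inl_eq_iff u v).2 ((hr u).trans (hr v).symm)
end
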